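/- (Robbins' bounds) For every positive integer n, √(2πn)·(n/e)^n·exp(1/(12n+1)) ≤ n! ≤ √(2πn)·(n/e)^n·exp(1/(12n)). -/

import Mathlib

/-!
Write `s n = n! / (√(2n) (n/e)^n)`, so that `s n → √π`. The series expansion of
`log s n - log s (n + 1)` in powers of `(2n + 1)⁻²` has positive terms; its first term
`1/(3(2n+1)²)` bounds it below by `1/(12n+1) - 1/(12(n+1)+1)`, and comparison with a geometric
series bounds it above by `1/(12n) - 1/(12(n+1))`. Telescoping these bounds against the limit
`log √π` gives `1/(12n+1) ≤ log s n - log √π ≤ 1/(12n)`.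
-/

open Real Filter Topology Nat Stirling

lemma tendsto_one_div_mul_add_nat {a : ℝ} (ha : 0 < a) (b : ℝ) :
    Tendsto (fun n : ℕ => 1 / (a * n + b)) atTop (𝓝 0) :=
  tendsto_const_nhds.div_atTop <|
    tendsto_atTop_add_const_right _ b (tendsto_natCast_atTop_atTop.const_mul_atTop ha)

lemma le_add_of_tendsto_of_sub_succ_le {f g : ℕ → ℝ} {L : ℝ} (hf : Tendsto f atTop (𝓝 L))
    (hg : Tendsto g atTop (𝓝 0)) (h : ∀ n, f n - f (n + 1) ≤ g n - g (n + 1)) (n : ℕ) :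
    f n ≤ L + g n := by
  have hmono : Monotone fun k => f k - g k :=
    monotone_nat_of_le_succ fun k => by linarith [h k]
  linarith [hmono.ge_of_tendsto (by simpa using hf.sub hg) n]

lemma add_le_of_tendsto_of_le_sub_succ {f g : ℕ → ℝ} {L : ℝ}
    (hf : Tendsto f atTop (𝓝 L)) (hg : Tendsto g atTop (𝓝 0))
    (h : ∀ n, g n - g (n + 1) ≤ f n - f (n + 1)) (n : ℕ) :
    L + g n ≤ f n := by
  linarith [le_add_of_tendsto_of_sub_succ_le (f := fun k => -f k) (g := fun k => -g k) hf.neg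
    (by simpa using hg.neg) (fun k => by linarith [h k]) n]

namespace Stirling

lemma sub_le_log_stirlingSeq_sdiff {n : ℕ} (hn : n ≠ 0) :
    1 / (12 * n + 1) - 1 / (12 * (n + 1) + 1) ≤
      log (stirlingSeq n) - log (stirlingSeq (n + 1)) := by
  obtain ⟨m, rfl⟩ := exists_eq_succ_of_ne_zero hn
  refine le_trans ?_ (le_hasSum (log_stirlingSeq_sdiff_hasSum m) 0 fun k _ => by positivity)
  have hm : (0 : ℝ) ≤ m := m.cast_nonneg
  push_cast
  rw [div_sub_div _ _ (by positivity) (by positivity), div_le_iff₀ (by positivity)]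
  field_simp
  nlinarith

lemma tendsto_log_stirlingSeq : Tendsto (fun n => log (stirlingSeq n)) atTop (𝓝 (log √π)) :=
  (continuousAt_log (by positivity)).tendsto.comp tendsto_stirlingSeq_sqrt_pi

lemma log_stirlingSeq_le {n : ℕ} (hn : n ≠ 0) :
    log (stirlingSeq n) ≤ log √π + 1 / (12 * n) := by
  obtain ⟨m, rfl⟩ := exists_eq_succ_of_ne_zero hn
  refine le_add_of_tendsto_of_sub_succ_le (f := fun k => log (stirlingSeq (k + 1)))
    (g := fun k => 1 / (12 * ((k + 1 : ℕ) : ℝ)))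
    (tendsto_log_stirlingSeq.comp (tendsto_add_atTop_nat 1))
    (by simpa [Function.comp_def] using
      (tendsto_one_div_mul_add_nat (a := 12) (by norm_num) 0).comp (tendsto_add_atTop_nat 1))
    (fun k => ?_) m
  exact (log_stirlingSeq_sdiff_le _).trans_eq (by push_cast; field_simp; ring)

lemma le_log_stirlingSeq {n : ℕ} (hn : n ≠ 0) :
    log √π + 1 / (12 * n + 1) ≤ log (stirlingSeq n) := by
  obtain ⟨m, rfl⟩ := exists_eq_succ_of_ne_zero hn
  refine add_le_of_tendsto_of_le_sub_succ (f := fun k => log (stirlingSeq (k + 1)))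
    (g := fun k => 1 / (12 * ((k + 1 : ℕ) : ℝ) + 1))
    (tendsto_log_stirlingSeq.comp (tendsto_add_atTop_nat 1))
    ((tendsto_one_div_mul_add_nat (a := 12) (by norm_num) 1).comp (tendsto_add_atTop_nat 1))
    (fun k => ?_) m
  exact_mod_cast sub_le_log_stirlingSeq_sdiff k.succ_ne_zero

lemma sqrt_pi_mul_exp_le_stirlingSeq {n : ℕ} (hn : n ≠ 0) :
    √π * exp (1 / (12 * n + 1)) ≤ stirlingSeq n := by
  have hs : 0 < stirlingSeq n := (sqrt_pos.2 pi_pos).trans_le (sqrt_pi_le_stirlingSeq hn)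
  simpa [exp_add, exp_log, hs, pi_pos] using exp_le_exp.2 (le_log_stirlingSeq hn)

lemma stirlingSeq_le_sqrt_pi_mul_exp {n : ℕ} (hn : n ≠ 0) :
    stirlingSeq n ≤ √π * exp (1 / (12 * n)) := by
  have hs : 0 < stirlingSeq n := (sqrt_pos.2 pi_pos).trans_le (sqrt_pi_le_stirlingSeq hn)
  simpa [exp_add, exp_log, hs, pi_pos] using exp_le_exp.2 (log_stirlingSeq_le hn)

lemma factorial_eq_stirlingSeq_mul {n : ℕ} (hn : n ≠ 0) :
    (n ! : ℝ) = stirlingSeq n * (√(2 * n) * (n / exp 1) ^ n) := by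
  rw [stirlingSeq, div_mul_cancel₀]
  positivity

end Stirling

theorem stmt_18 (n : ℕ) (hn : 0 < n) :
    Real.sqrt (2 * Real.pi * n) * ((n : ℝ) / Real.exp 1) ^ n * Real.exp (1 / (12 * n + 1))
        ≤ (n.factorial : ℝ) ∧
      (n.factorial : ℝ) ≤
        Real.sqrt (2 * Real.pi * n) * ((n : ℝ) / Real.exp 1) ^ n * Real.exp (1 / (12 * n)) := by
  have hP : √(2 * π * n) * (n / exp 1) ^ n = √π * (√(2 * n) * (n / exp 1) ^ n) := by
    rw [← mul_assoc, ← sqrt_mul pi_pos.le]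
    ring_nf
  have hD : 0 ≤ √(2 * n) * (n / exp 1) ^ n := by positivity
  rw [hP, factorial_eq_stirlingSeq_mul hn.ne']
  exact ⟨Eq.trans_le (by ring)
      (mul_le_mul_of_nonneg_right (sqrt_pi_mul_exp_le_stirlingSeq hn.ne') hD),
    (mul_le_mul_of_nonneg_right (stirlingSeq_le_sqrt_pi_mul_exp hn.ne') hD).trans_eq (by ring)⟩
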